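/- Classification of the omniscience principles under continuous Weihrauch reducibility: (1) LLPO ≤_W LPO; (2) \widehat{LLPO} ≤_W C; (3) LPO is not reducible to \widehat{LLPO} (in particular LPO is not reducible to LLPO); (4) \widehat{LLPO} is not reducible to LPO; (5) C is not reducible to \widehat{LLPO}. Hence LLPO <_W LPO, LPO and \widehat{LLPO} are incomparable, and \widehat{LLPO} <_W C. -/

import Mathlib

/-!
Every Weihrauch reduction `f ≤_W g` can be read pointwise: on an instance `p` of `f`, any answer
to the instance `K p` of `g` (any point at all if `K p ∉ dom g`) is turned by `H` into an answer
for `p`, since such an answer is the value at `K p` of some realizer of `g`.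

The positive reductions ask `LPO` whether some odd entry of an `LLPO` instance is nonzero, row by
row in the parallel case.

`LPO ≰_W \widehat{LLPO}`: the graph of `\widehat{LLPO}` is closed and its answers lie in the
compact Cantor space. Along `p_t = 1^t 0 1^ω → 1^ω`, answers `q_t` to `K p_t` have a cluster
point `a`, and closedness makes `a` an answer to `K 1^ω`; continuity of `H` then forces the
same `LPO` answer on `p_t` (which contain a zero) and on `1^ω` (which does not).
This also gives `LPO ≰_W LLPO` and `C ≰_W \widehat{LLPO}`, as `LLPO ≤_W \widehat{LLPO}`
and `LPO ≤_W C`.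

`\widehat{LLPO} ≰_W LPO`: the `LPO` answer `b(p)` only selects one of two continuous maps
`p ↦ H⟨p, b⟩`, and `b(p) = 0` is an open condition. A continuous map cannot solve
`\widehat{LLPO}` on a neighbourhood of an instance with an all-zero row `k`: its `k`-th output
is locally constant, equal to `c` say, and a single `1` placed far out at an entry of row `k`
of parity `c` makes `c` wrong. Starting from `0^ω`, at most one such perturbation (in row `0`)
moves us into the open region `b = 0`, where a second one (in row `1`) gives the contradiction.
-/

/-- Baire space `ℕ^ℕ` with the product topology (`ℕ` discrete). -/
abbrev Baire : Type := ℕ → ℕ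

/-- The pairing `⟨p,q⟩` on Baire space: `⟨p,q⟩(2n) = p(n)`, `⟨p,q⟩(2n+1) = q(n)`. -/
def bpair (p q : Baire) : Baire := fun n => if n % 2 = 0 then p (n / 2) else q (n / 2)

/-- First projection `π₁`. -/
def proj1 (r : Baire) : Baire := fun n => r (2 * n)

/-- Second projection `π₂`. -/
def proj2 (r : Baire) : Baire := fun n => r (2 * n + 1)

/-- Multi-valued functions on Baire space. -/
abbrev MV : Type := Baire → Set Baire

/-- The domain of a multi-valued function. -/
def dom (f : MV) : Set Baire := {p | (f p).Nonempty}

/-- `F` is a realizer of `f`: `F p ∈ f p` for all `p` in the domain of `f`. -/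
def Realizes (F : Baire → Baire) (f : MV) : Prop := ∀ p, (f p).Nonempty → F p ∈ f p

/-- Continuous Weihrauch reducibility `f ≤_W g`. -/
def WRed (f g : MV) : Prop :=
  ∃ H K : Baire → Baire, Continuous H ∧ Continuous K ∧
    ∀ G : Baire → Baire, Realizes G g → Realizes (fun p => H (bpair p (G (K p)))) f

/-- Strong continuous Weihrauch reducibility `f ≤_sW g`. -/
def SWRed (f g : MV) : Prop :=
  ∃ H K : Baire → Baire, Continuous H ∧ Continuous K ∧
    ∀ G : Baire → Baire, Realizes G g → Realizes (fun p => H (G (K p))) f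

/-- Continuous Weihrauch equivalence. -/
def WEquiv (f g : MV) : Prop := WRed f g ∧ WRed g f

/-- Strong continuous Weihrauch equivalence. -/
def SWEquiv (f g : MV) : Prop := SWRed f g ∧ SWRed g f

/-- The limited principle of omniscience `LPO`. -/
def LPO : MV := fun p =>
  {q | ((∃ n, p n = 0) ∧ q 0 = 0) ∨ ((¬ ∃ n, p n = 0) ∧ q 0 = 1)}

/-- The parallelized lesser limited principle of omniscience. -/
def parLLPO : MV := fun p =>
  {q | ∀ k, (q k = 0 ∧ ∀ n, p (Nat.pair k (2 * n)) = 0) ∨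
            (q k = 1 ∧ ∀ n, p (Nat.pair k (2 * n + 1)) = 0)}

/-- The parallelization of `LPO` as a single-valued function:
`C(p)(n) = 0` if `∃ k, p⟨n,k⟩ = 0` and `1` otherwise. -/
noncomputable def C : Baire → Baire := fun p n =>
  letI := Classical.propDecidable
  if ∃ k, p (Nat.pair n k) = 0 then 0 else 1

/-- The lesser limited principle of omniscience `LLPO`. -/
def LLPO : MV := fun p =>
  {q | (q 0 = 0 ∧ ∀ n, p (2 * n) = 0) ∨ (q 0 = 1 ∧ ∀ n, p (2 * n + 1) = 0)}

/-- `C` as a multi-valued function. -/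
noncomputable def Cmv : MV := fun p => {C p}

open Filter Topology Function

lemma Continuous.bpair {X : Type*} [TopologicalSpace X] {f g : X → Baire}
    (hf : Continuous f) (hg : Continuous g) : Continuous fun x => bpair (f x) (g x) := by
  refine continuous_pi fun n => ?_
  unfold _root_.bpair
  split
  · exact (continuous_apply _).comp hf
  · exact (continuous_apply _).comp hg

lemma continuous_proj1 : Continuous proj1 := continuous_pi fun n => continuous_apply (2 * n)

lemma continuous_proj2 : Continuous proj2 := continuous_pi fun n => continuous_apply (2 * n + 1)

@[simp]
lemma proj1_bpair (p q : Baire) : proj1 (bpair p q) = p := by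
  funext n
  simp [proj1, bpair]

@[simp]
lemma proj2_bpair (p q : Baire) : proj2 (bpair p q) = q := by
  funext n
  simp only [proj2, bpair]
  rw [if_neg (by omega)]
  congr 1
  omega

lemma bpair_two_mul_add_one (p q : Baire) (n : ℕ) : bpair p q (2 * n + 1) = q n :=
  congrFun (proj2_bpair p q) n

lemma continuous_coordwise (ι : ℕ → ℕ) (φ : ℕ → ℕ → ℕ) :
    Continuous fun (p : Baire) n => φ n (p (ι n)) :=
  continuous_pi fun n => (continuous_of_discreteTopology (f := φ n)).comp (continuous_apply (ι n))

lemma tendsto_update_atTop (p : Baire) (v : ℕ) :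
    Tendsto (fun i => update p i v) atTop (𝓝 p) :=
  tendsto_pi_nhds.2 fun j => tendsto_const_nhds.congr' <|
    (eventually_ne_atTop j).mono fun _ hi => (update_of_ne hi.symm v p).symm

lemma exists_realizer_apply_eq {g : MV} {r q : Baire} (hq : (g r).Nonempty → q ∈ g r) :
    ∃ G, Realizes G g ∧ G r = q := by
  classical
  refine ⟨fun r' => if r' = r then q else if h : (g r').Nonempty then h.some else q, ?_, by simp⟩
  intro r' hr'
  by_cases h : r' = r
  · subst h
    simpa using hq hr'
  · simpa [h, hr'] using hr'.some_mem

theorem wRed_iff {f g : MV} :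
    WRed f g ↔ ∃ H K : Baire → Baire, Continuous H ∧ Continuous K ∧
      ∀ p q, (f p).Nonempty → ((g (K p)).Nonempty → q ∈ g (K p)) → H (bpair p q) ∈ f p := by
  constructor
  · rintro ⟨H, K, hH, hK, hred⟩
    refine ⟨H, K, hH, hK, fun p q hp hq => ?_⟩
    obtain ⟨G, hG, hGq⟩ := exists_realizer_apply_eq hq
    simpa [hGq] using hred G hG p hp
  · rintro ⟨H, K, hH, hK, hsol⟩
    exact ⟨H, K, hH, hK, fun G hG p hp => hsol p _ hp (hG _)⟩

theorem WRed.trans {f g h : MV} (hfg : WRed f g) (hgh : WRed g h) : WRed f h := by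
  rw [wRed_iff] at *
  obtain ⟨H₁, K₁, hH₁, hK₁, hsol₁⟩ := hfg
  obtain ⟨H₂, K₂, hH₂, hK₂, hsol₂⟩ := hgh
  refine ⟨fun r => H₁ (bpair (proj1 r) (H₂ (bpair (K₁ (proj1 r)) (proj2 r)))), K₂ ∘ K₁,
    hH₁.comp (continuous_proj1.bpair (hH₂.comp ((hK₁.comp continuous_proj1).bpair
      continuous_proj2))), hK₂.comp hK₁, fun p q hp hq => ?_⟩
  simpa using hsol₁ p _ hp fun hg => hsol₂ _ q hg hq

lemma LPO_nonempty (p : Baire) : (LPO p).Nonempty := by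
  by_cases h : ∃ n, p n = 0
  · exact ⟨fun _ => 0, .inl ⟨h, rfl⟩⟩
  · exact ⟨fun _ => 1, .inr ⟨h, rfl⟩⟩

lemma apply_zero_eq_zero_iff_of_mem_LPO {p q : Baire} (hq : q ∈ LPO p) :
    q 0 = 0 ↔ ∃ n, p n = 0 := by
  rcases hq with ⟨h, h0⟩ | ⟨h, h1⟩ <;> simp [*]

lemma C_spec (p : Baire) (n : ℕ) :
    ((∃ k, p (Nat.pair n k) = 0) ∧ C p n = 0) ∨ ((¬∃ k, p (Nat.pair n k) = 0) ∧ C p n = 1) := by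
  by_cases h : ∃ k, p (Nat.pair n k) = 0 <;> simp [C, h]

lemma llpo_of_lpo_odd {x : Baire} (hx : (∀ n, x (2 * n) = 0) ∨ ∀ n, x (2 * n + 1) = 0) {b : ℕ}
    (hb : ((∃ n, x (2 * n + 1) ≠ 0) ∧ b = 0) ∨ ((¬∃ n, x (2 * n + 1) ≠ 0) ∧ b = 1)) :
    (b = 0 ∧ ∀ n, x (2 * n) = 0) ∨ (b = 1 ∧ ∀ n, x (2 * n + 1) = 0) := by
  rcases hb with ⟨⟨n, hn⟩, rfl⟩ | ⟨h, rfl⟩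
  · exact .inl ⟨rfl, hx.resolve_right fun h => hn (h n)⟩
  · exact .inr ⟨rfl, not_exists_not.1 h⟩

theorem wRed_LLPO_LPO : WRed LLPO LPO := by
  refine wRed_iff.2 ⟨fun r _ => r 1, fun p n => if p (2 * n + 1) = 0 then 1 else 0,
    continuous_coordwise (fun _ => 1) (fun _ v => v),
    continuous_coordwise (fun n => 2 * n + 1) (fun _ v => if v = 0 then 1 else 0), ?_⟩
  rintro p q ⟨w, hw⟩ hq
  have hLPO : q ∈ LPO _ := hq (LPO_nonempty _)
  simp only [LPO, Set.mem_ofPred_eq, ite_eq_right_iff, one_ne_zero, imp_false] at hLPO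
  exact llpo_of_lpo_odd (hw.imp And.right And.right) hLPO

theorem wRed_parLLPO_Cmv : WRed parLLPO Cmv := by
  refine wRed_iff.2 ⟨fun r k => r (2 * k + 1),
    fun p i => if p (Nat.pair i.unpair.1 (2 * i.unpair.2 + 1)) = 0 then 1 else 0,
    continuous_coordwise (fun k => 2 * k + 1) (fun _ v => v),
    continuous_coordwise (fun i => Nat.pair i.unpair.1 (2 * i.unpair.2 + 1))
      (fun _ v => if v = 0 then 1 else 0), ?_⟩
  rintro p q ⟨w, hw⟩ hq
  obtain rfl : q = C _ := hq ⟨_, rfl⟩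
  intro k
  have hC := C_spec (fun i => if p (Nat.pair i.unpair.1 (2 * i.unpair.2 + 1)) = 0 then 1 else 0) k
  simp only [Nat.unpair_pair, ite_eq_right_iff, one_ne_zero, imp_false] at hC
  dsimp only
  rw [bpair_two_mul_add_one]
  exact llpo_of_lpo_odd (x := fun n => p (Nat.pair k n)) ((hw k).imp And.right And.right) hC

theorem wRed_LLPO_parLLPO : WRed LLPO parLLPO := by
  refine wRed_iff.2 ⟨fun r _ => r 1, fun p i => p i.unpair.2,
    continuous_coordwise (fun _ => 1) (fun _ v => v),
    continuous_coordwise (fun i => i.unpair.2) (fun _ v => v), ?_⟩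
  rintro p q ⟨w, hw⟩ hq
  have hdom : (parLLPO fun i => p i.unpair.2).Nonempty :=
    ⟨fun _ => w 0, fun _ => by simp only [Nat.unpair_pair]; exact hw⟩
  have hrow := hq hdom 0
  simp only [Nat.unpair_pair] at hrow
  exact hrow

theorem wRed_LPO_Cmv : WRed LPO Cmv := by
  refine wRed_iff.2 ⟨fun r _ => r 1, fun p i => p i.unpair.2,
    continuous_coordwise (fun _ => 1) (fun _ v => v),
    continuous_coordwise (fun i => i.unpair.2) (fun _ v => v), ?_⟩
  rintro p q - hq
  obtain rfl : q = C _ := hq ⟨_, rfl⟩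
  have hrow := C_spec (fun i => p i.unpair.2) 0
  simp only [Nat.unpair_pair] at hrow
  exact hrow

theorem not_wRed_LPO_of_isClosed_graph {g : MV} {S : Set Baire} (hS : IsCompact S)
    (hS₀ : S.Nonempty) (hgS : ∀ r, g r ⊆ S) (hg : IsClosed {x : Baire × Baire | x.2 ∈ g x.1}) :
    ¬ WRed LPO g := by
  classical
  rw [wRed_iff]
  rintro ⟨H, K, hH, hK, hsol⟩
  obtain ⟨sel, hselS, hsel⟩ : ∃ sel : Baire → Baire,
      (∀ r, sel r ∈ S) ∧ ∀ r, (g r).Nonempty → sel r ∈ g r :=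
    ⟨fun r => if h : (g r).Nonempty then h.some else hS₀.some,
      fun r => by dsimp only; split_ifs with h; exacts [hgS r h.some_mem, hS₀.some_mem],
      fun r h => by simpa [h] using h.some_mem⟩
  let ones : Baire := fun _ => 1
  let p : ℕ → Baire := fun t => update ones t 0
  -- where `g (K (p t))` is empty any answer will do; answering `K ones` instead keeps
  -- `(r t, q t)` in the graph of `g`
  let r : ℕ → Baire := fun t => if (g (K (p t))).Nonempty then K (p t) else K ones
  let q : ℕ → Baire := fun t => sel (r t)
  have hq : ∀ t, (g (K (p t))).Nonempty → q t ∈ g (K (p t)) := fun t ht => by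
    simpa [q, r, ht] using hsel _ ht
  let U := Ultrafilter.of (atTop : Filter ℕ)
  have hpU : Tendsto p U (𝓝 ones) := (tendsto_update_atTop ones 0).mono_left (Ultrafilter.of_le _)
  have hrU : Tendsto r U (𝓝 (K ones)) :=
    (((hK.tendsto _).comp hpU).mono_left inf_le_left).if (tendsto_const_nhds.mono_left inf_le_left)
  obtain ⟨a, -, ha⟩ :=
    hS.ultrafilter_le_nhds (U.map q) (tendsto_principal.2 (.of_forall fun t => hselS (r t)))
  have hqU : Tendsto q U (𝓝 a) := ha
  have ha_sol : (g (K ones)).Nonempty → a ∈ g (K ones) := fun h =>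
    hg.mem_of_tendsto (hrU.prodMk_nhds hqU) <| .of_forall fun t => by
      by_cases ht : (g (K (p t))).Nonempty <;> simp only [r, q, ht, ↓reduceIte] <;> exact hsel _ ‹_›
  have h₁ : H (bpair ones a) 0 ≠ 0 := by
    simpa [ones] using apply_zero_eq_zero_iff_of_mem_LPO (hsol ones a (LPO_nonempty _) ha_sol)
  have h₀ : ∀ t, H (bpair (p t) (q t)) 0 = 0 := fun t =>
    (apply_zero_eq_zero_iff_of_mem_LPO (hsol (p t) (q t) (LPO_nonempty _) (hq t))).2
      ⟨t, update_self ..⟩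
  have hlim : Tendsto (fun t => H (bpair (p t) (q t)) 0) U (𝓝 (H (bpair ones a) 0)) :=
    (((continuous_apply 0).comp (hH.comp (continuous_fst.bpair continuous_snd))).tendsto _).comp
      (hpU.prodMk_nhds hqU)
  simp only [h₀, tendsto_const_nhds_iff] at hlim
  exact h₁ hlim.symm

lemma parLLPO_subset_cantor (r : Baire) : parLLPO r ⊆ Set.univ.pi fun _ => Set.Iic 1 :=
  fun q hq k _ => by rcases hq k with ⟨h, -⟩ | ⟨h, -⟩ <;> simp [h]

lemma isClosed_graph_parLLPO : IsClosed {x : Baire × Baire | x.2 ∈ parLLPO x.1} := by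
  have hcoord : ∀ (f : Baire × Baire → ℕ), Continuous f → ∀ c, IsClosed {x | f x = c} :=
    fun f hf c => isClosed_eq hf continuous_const
  change IsClosed {x : Baire × Baire | ∀ k, (x.2 k = 0 ∧ ∀ n, x.1 (Nat.pair k (2 * n)) = 0) ∨
    (x.2 k = 1 ∧ ∀ n, x.1 (Nat.pair k (2 * n + 1)) = 0)}
  simp only [Set.ofPred_forall, Set.ofPred_or, Set.ofPred_and]
  exact isClosed_iInter fun k =>
    ((hcoord _ (by fun_prop) _).inter (isClosed_iInter fun n => hcoord _ (by fun_prop) _)).union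
      ((hcoord _ (by fun_prop) _).inter (isClosed_iInter fun n => hcoord _ (by fun_prop) _))

theorem not_wRed_LPO_parLLPO : ¬ WRed LPO parLLPO :=
  not_wRed_LPO_of_isClosed_graph (isCompact_univ_pi fun _ => (Set.finite_Iic 1).isCompact)
    ⟨0, fun _ _ => zero_le_one⟩ parLLPO_subset_cantor isClosed_graph_parLLPO

lemma notMem_parLLPO_of_ne_zero {p q : Baire} {k m : ℕ} (h : p (Nat.pair k (2 * m + q k)) ≠ 0) :
    q ∉ parLLPO p := by
  intro hq
  rcases hq k with ⟨hk, heven⟩ | ⟨hk, hodd⟩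
  · rw [hk] at h
    exact h (heven m)
  · rw [hk] at h
    exact h (hodd m)

lemma parLLPO_update_nonempty {p : Baire} (hp : (parLLPO p).Nonempty) {k : ℕ}
    (hk : ∀ n, p (Nat.pair k n) = 0) (n v : ℕ) :
    (parLLPO (update p (Nat.pair k n) v)).Nonempty := by
  obtain ⟨w, hw⟩ := hp
  refine ⟨update w k (if n % 2 = 0 then 1 else 0), fun j => ?_⟩
  by_cases hj : j = k
  · subst hj
    rcases Nat.mod_two_eq_zero_or_one n with hn | hn
    · refine .inr ⟨by simp [hn], fun m => ?_⟩
      rw [update_of_ne (by simp [Nat.pair_eq_pair]; omega), hk]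
    · refine .inl ⟨by simp [hn], fun m => ?_⟩
      rw [update_of_ne (by simp [Nat.pair_eq_pair]; omega), hk]
  · simpa [update_apply, Nat.pair_eq_pair, hj] using hw j

lemma exists_update_notMem_parLLPO {Φ : Baire → Baire} (hΦ : Continuous Φ) {p : Baire}
    {s : Set Baire} (hs : s ∈ 𝓝 p) (k : ℕ) :
    ∃ n, update p (Nat.pair k n) 1 ∈ s ∧
      Φ (update p (Nat.pair k n) 1) ∉ parLLPO (update p (Nat.pair k n) 1) := by
  set c := Φ p k
  have hpair : Tendsto (fun m => Nat.pair k (2 * m + c)) atTop atTop :=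
    tendsto_atTop_mono (fun m => (show m ≤ 2 * m + c by omega).trans (Nat.right_le_pair _ _))
      tendsto_id
  have hc : ∀ᶠ p' in 𝓝 p, Φ p' k = c :=
    tendsto_pure.1 (nhds_discrete ℕ ▸ ((continuous_apply k).comp hΦ).tendsto p)
  obtain ⟨m, hms, hmc⟩ :=
    (((tendsto_update_atTop p 1).comp hpair).eventually (inter_mem hs hc)).exists
  refine ⟨2 * m + c, hms, notMem_parLLPO_of_ne_zero (k := k) (m := m) ?_⟩
  simp [show Φ (update p (Nat.pair k (2 * m + c)) 1) k = c from hmc]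

theorem not_wRed_parLLPO_LPO : ¬ WRed parLLPO LPO := by
  rw [wRed_iff]
  rintro ⟨H, K, hH, hK, hsol⟩
  let Φ : ℕ → Baire → Baire := fun b p => H (bpair p fun _ => b)
  have hΦ : ∀ b, Continuous (Φ b) := fun b => hH.comp (continuous_id.bpair continuous_const)
  let Z := {p : Baire | ∃ j, K p j = 0}
  have hZ : IsOpen Z := by
    simp only [Z, Set.ofPred_exists]
    exact isOpen_iUnion fun j => (isOpen_discrete {0}).preimage ((continuous_apply j).comp hK)
  have hΦ₀ : ∀ p ∈ Z, (parLLPO p).Nonempty → Φ 0 p ∈ parLLPO p :=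
    fun p hp hdom => hsol p _ hdom fun _ => .inl ⟨hp, rfl⟩
  have hΦ₁ : ∀ p ∉ Z, (parLLPO p).Nonempty → Φ 1 p ∈ parLLPO p :=
    fun p hp hdom => hsol p _ hdom fun _ => .inr ⟨hp, rfl⟩
  have hfree : ∀ p ∈ Z, (parLLPO p).Nonempty → ∀ k, (∀ n, p (Nat.pair k n) = 0) → False := by
    intro p hp hdom k hk
    obtain ⟨n, hnZ, hn⟩ := exists_update_notMem_parLLPO (hΦ 0) (hZ.mem_nhds hp) k
    exact hn (hΦ₀ _ hnZ (parLLPO_update_nonempty hdom hk n 1))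
  have hdom₀ : (parLLPO 0).Nonempty := ⟨0, fun _ => .inl ⟨rfl, fun _ => rfl⟩⟩
  by_cases h₀ : (0 : Baire) ∈ Z
  · exact hfree 0 h₀ hdom₀ 0 fun _ => rfl
  obtain ⟨n, -, hn⟩ := exists_update_notMem_parLLPO (hΦ 1) (p := 0) univ_mem 0
  have hdom₁ := parLLPO_update_nonempty hdom₀ (k := 0) (fun _ => rfl) n 1
  have h₁ : update (0 : Baire) (Nat.pair 0 n) 1 ∈ Z := by_contra fun h => hn (hΦ₁ _ h hdom₁)
  exact hfree _ h₁ hdom₁ 1 fun m => by simp [Nat.pair_eq_pair]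

/-- Classification of the omniscience principles under continuous Weihrauch
reducibility: `LLPO <_W LPO`, `LPO` and `\widehat{LLPO}` are incomparable, and
`\widehat{LLPO} <_W C`. -/
theorem omniscience_classification :
    WRed LLPO LPO ∧
    WRed parLLPO Cmv ∧
    ¬ WRed LPO parLLPO ∧
    ¬ WRed LPO LLPO ∧
    ¬ WRed parLLPO LPO ∧
    ¬ WRed Cmv parLLPO :=
  ⟨wRed_LLPO_LPO, wRed_parLLPO_Cmv, not_wRed_LPO_parLLPO,
    fun h => not_wRed_LPO_parLLPO (h.trans wRed_LLPO_parLLPO), not_wRed_parLLPO_LPO,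
    fun h => not_wRed_LPO_parLLPO (wRed_LPO_Cmv.trans h)⟩
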